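/- For each ε ∈ {−1, 0, 1}, the function F(x,y,y₁,y₂,y₃,y₄) = 5y₄²/(3y₃) + ε·y₃^{5/3}, which is smooth on the open set U = {(x,y,y₁,y₂,y₃,y₄) ∈ ℝ⁶ : y₃ > 0}, satisfies the three Wünschmann conditions (W1), (W2), (W3) at every point of U. -/

import Mathlib

/-- Partial derivative of `G : ℝ⁶ → ℝ` in the `i`-th coordinate direction.
Coordinates: `p 0 = x`, `p 1 = y`, `p 2 = y₁`, `p 3 = y₂`, `p 4 = y₃`, `p 5 = y₄`. -/
noncomputable def pd (i : Fin 6) (G : (Fin 6 → ℝ) → ℝ) (p : Fin 6 → ℝ) : ℝ :=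
  fderiv ℝ G p (Pi.single i 1)

/-- The total derivative `𝒟G = Gₓ + y₁G_y + y₂G_{y₁} + y₃G_{y₂} + y₄G_{y₃} + F·G_{y₄}`. -/
noncomputable def Dt (F G : (Fin 6 → ℝ) → ℝ) : (Fin 6 → ℝ) → ℝ := fun p =>
  pd 0 G p + p 2 * pd 1 G p + p 3 * pd 2 G p + p 4 * pd 3 G p + p 5 * pd 4 G p
    + F p * pd 5 G p

/-- First Wünschmann condition:
`50𝒟²F₄ − 75𝒟F₃ + 50F₂ − 60F₄𝒟F₄ + 30F₃F₄ + 8F₄³ = 0`. -/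
def Wuensch1 (F : (Fin 6 → ℝ) → ℝ) (p : Fin 6 → ℝ) : Prop :=
  50 * Dt F (Dt F (pd 5 F)) p - 75 * Dt F (pd 4 F) p + 50 * pd 3 F p
    - 60 * pd 5 F p * Dt F (pd 5 F) p + 30 * pd 4 F p * pd 5 F p
    + 8 * (pd 5 F p) ^ 3 = 0

/-- Second Wünschmann condition:
`375𝒟²F₃ − 1000𝒟F₂ + 350(𝒟F₄)² + 1250F₁ − 650F₃𝒟F₄ + 200F₃² − 150F₄𝒟F₃ + 200F₂F₄`
`− 140F₄²𝒟F₄ + 130F₃F₄² + 14F₄⁴ = 0`. -/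
def Wuensch2 (F : (Fin 6 → ℝ) → ℝ) (p : Fin 6 → ℝ) : Prop :=
  375 * Dt F (Dt F (pd 4 F)) p - 1000 * Dt F (pd 3 F) p + 350 * (Dt F (pd 5 F) p) ^ 2
    + 1250 * pd 2 F p - 650 * pd 4 F p * Dt F (pd 5 F) p + 200 * (pd 4 F p) ^ 2
    - 150 * pd 5 F p * Dt F (pd 4 F) p + 200 * pd 3 F p * pd 5 F p
    - 140 * (pd 5 F p) ^ 2 * Dt F (pd 5 F) p + 130 * pd 4 F p * (pd 5 F p) ^ 2
    + 14 * (pd 5 F p) ^ 4 = 0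

/-- Third Wünschmann condition:
`1250𝒟²F₂ − 6250𝒟F₁ + 1750(𝒟F₃)(𝒟F₄) − 2750F₂𝒟F₄ − 875F₃𝒟F₃ + 1250F₂F₃ − 500F₄𝒟F₂`
`+ 700F₄(𝒟F₄)² + 1250F₁F₄ − 1050F₃F₄𝒟F₄ + 350F₃²F₄ − 350F₄²𝒟F₃ + 550F₂F₄²`
`− 280F₄³𝒟F₄ + 210F₃F₄³ + 28F₄⁵ + 18750F_y = 0`. -/
def Wuensch3 (F : (Fin 6 → ℝ) → ℝ) (p : Fin 6 → ℝ) : Prop :=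
  1250 * Dt F (Dt F (pd 3 F)) p - 6250 * Dt F (pd 2 F) p
    + 1750 * Dt F (pd 4 F) p * Dt F (pd 5 F) p - 2750 * pd 3 F p * Dt F (pd 5 F) p
    - 875 * pd 4 F p * Dt F (pd 4 F) p + 1250 * pd 3 F p * pd 4 F p
    - 500 * pd 5 F p * Dt F (pd 3 F) p + 700 * pd 5 F p * (Dt F (pd 5 F) p) ^ 2
    + 1250 * pd 2 F p * pd 5 F p - 1050 * pd 4 F p * pd 5 F p * Dt F (pd 5 F) p
    + 350 * (pd 4 F p) ^ 2 * pd 5 F p - 350 * (pd 5 F p) ^ 2 * Dt F (pd 4 F) p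
    + 550 * pd 3 F p * (pd 5 F p) ^ 2 - 280 * (pd 5 F p) ^ 3 * Dt F (pd 5 F) p
    + 210 * pd 4 F p * (pd 5 F p) ^ 3 + 28 * (pd 5 F p) ^ 5
    + 18750 * pd 1 F p = 0

/-- The defining function `F = 5y₄²/(3y₃) + ε·y₃^{5/3}`. -/
noncomputable def Feps (ε : ℝ) : (Fin 6 → ℝ) → ℝ := fun p =>
  5 * (p 5) ^ 2 / (3 * p 4) + ε * (p 4) ^ ((5 : ℝ) / 3)


/-!
`F` depends on `y₃` and `y₄` alone, and so does every function `G` obtained from it by the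
operations in the Wünschmann conditions; for such `G` the total derivative collapses to
`𝒟G = y₄ G_{y₃} + F G_{y₄}`. On `y₃ > 0` all these functions are sums of monomials
`y₃^{k/3} y₄^m` with `k ∈ ℤ`, a class closed under `∂_{y₃}`, `∂_{y₄}` and `𝒟`. Computing
`F₄, F₃, 𝒟F₄, 𝒟F₃, 𝒟²F₄, 𝒟²F₃` in this form (the remaining terms vanish) turns each condition into a
Laurent-polynomial identity in `y₃^{1/3}`, `y₄` and `ε`.
-/

open Filter Topology

namespace JetSpace

/-- The differential `a dy₃ + b dy₄`, i.e. the derivative of a function of `(y₃, y₄)` alone. -/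
noncomputable def dY (a b : ℝ) : (Fin 6 → ℝ) →L[ℝ] ℝ :=
  a • ContinuousLinearMap.proj 4 + b • ContinuousLinearMap.proj 5

theorem dY_add (a b c d : ℝ) : dY a b + dY c d = dY (a + c) (b + d) := by
  ext v; simp [dY]; ring

variable {F G H : (Fin 6 → ℝ) → ℝ} {q : Fin 6 → ℝ} {a b : ℝ}

theorem pd_four_of_hasFDerivAt (h : HasFDerivAt G (dY a b) q) : pd 4 G q = a := by
  simp [pd, h.fderiv, dY]

theorem pd_five_of_hasFDerivAt (h : HasFDerivAt G (dY a b) q) : pd 5 G q = b := by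
  simp [pd, h.fderiv, dY]

theorem pd_eq_zero_of_hasFDerivAt (h : HasFDerivAt G (dY a b) q) {i : Fin 6} (h4 : i ≠ 4)
    (h5 : i ≠ 5) : pd i G q = 0 := by
  simp [pd, h.fderiv, dY, h4.symm, h5.symm]

theorem Dt_of_hasFDerivAt (h : HasFDerivAt G (dY a b) q) : Dt F G q = q 5 * a + F q * b := by
  simp only [Dt, pd_four_of_hasFDerivAt h, pd_five_of_hasFDerivAt h,
    pd_eq_zero_of_hasFDerivAt h (i := 0) (by decide) (by decide),
    pd_eq_zero_of_hasFDerivAt h (i := 1) (by decide) (by decide),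
    pd_eq_zero_of_hasFDerivAt h (i := 2) (by decide) (by decide),
    pd_eq_zero_of_hasFDerivAt h (i := 3) (by decide) (by decide)]
  ring

theorem eventually_pos_y3 (hq : 0 < q 4) : ∀ᶠ x in 𝓝 q, 0 < x 4 :=
  (continuous_apply 4).continuousAt.eventually (lt_mem_nhds hq)

theorem HasFDerivAt.of_eq_of_pos_y3 {D : (Fin 6 → ℝ) →L[ℝ] ℝ} (h : HasFDerivAt H D q)
    (hGH : ∀ x, 0 < x 4 → G x = H x) (hq : 0 < q 4) : HasFDerivAt G D q :=
  h.congr_of_eventuallyEq ((eventually_pos_y3 hq).mono hGH)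

theorem Dt_eq_zero_of_eq_zero (hG : ∀ x, 0 < x 4 → G x = 0) (hq : 0 < q 4) : Dt F G q = 0 := by
  have h : HasFDerivAt G (dY 0 0) q :=
    (HasFDerivAt.of_eq_of_pos_y3 (hasFDerivAt_const 0 q) hG hq).congr_fderiv (by ext; simp [dY])
  simp [Dt_of_hasFDerivAt h]

theorem hasFDerivAt_mul_y3_y4 {f g : ℝ → ℝ} {f' g' : ℝ} (hf : HasDerivAt f f' (q 4))
    (hg : HasDerivAt g g' (q 5)) :
    HasFDerivAt (fun x => f (x 4) * g (x 5)) (dY (f' * g (q 5)) (f (q 4) * g')) q := by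
  have h4 := hf.comp_hasFDerivAt q (hasFDerivAt_apply (𝕜 := ℝ) 4 q)
  have h5 := hg.comp_hasFDerivAt q (hasFDerivAt_apply (𝕜 := ℝ) 5 q)
  refine (h4.mul h5).congr_fderiv ?_
  ext v; simp [dY]; ring

theorem hasDerivAt_rpow_inv_three_zpow {y : ℝ} (hy : 0 < y) (k : ℤ) :
    HasDerivAt (fun y : ℝ => (y ^ (3⁻¹ : ℝ)) ^ k) (k / 3 * (y ^ (3⁻¹ : ℝ)) ^ (k - 3)) y := by
  have hfun : ∀ (j : ℤ) (x : ℝ), 0 < x → (x ^ (3⁻¹ : ℝ)) ^ j = x ^ ((j : ℝ) / 3) := by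
    intro j x hx
    rw [← Real.rpow_intCast, ← Real.rpow_mul hx.le]; ring_nf
  have h := Real.hasDerivAt_rpow_const (x := y) (p := (k : ℝ) / 3) (Or.inl hy.ne')
  rw [show (k : ℝ) / 3 - 1 = ((k - 3 : ℤ) : ℝ) / 3 by push_cast; ring, ← hfun _ y hy] at h
  exact h.congr_of_eventuallyEq ((lt_mem_nhds hy).mono (hfun k))

/-- The monomial `c · y₃^{k/3} · y₄^m`. -/
noncomputable def mono (c : ℝ) (k : ℤ) (m : ℕ) (x : Fin 6 → ℝ) : ℝ :=
  c * (x 4 ^ (3⁻¹ : ℝ)) ^ k * x 5 ^ m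

theorem hasFDerivAt_mono (c : ℝ) (k : ℤ) (m : ℕ) (hq : 0 < q 4) :
    HasFDerivAt (mono c k m) (dY (mono (c * k / 3) (k - 3) m q) (mono (c * m) k (m - 1) q)) q := by
  have h := hasFDerivAt_mul_y3_y4 ((hasDerivAt_rpow_inv_three_zpow hq k).const_mul c)
    (hasDerivAt_pow m (q 5))
  refine h.congr_fderiv ?_
  simp only [mono]
  congr 1 <;> ring

theorem hasFDerivAt_of_eq_mono_add {c₁ c₂ : ℝ} {k₁ k₂ : ℤ} {m₁ m₂ : ℕ}
    (hG : ∀ x, 0 < x 4 → G x = mono c₁ k₁ m₁ x + mono c₂ k₂ m₂ x) (hq : 0 < q 4) :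
    HasFDerivAt G
      (dY (mono (c₁ * k₁ / 3) (k₁ - 3) m₁ q + mono (c₂ * k₂ / 3) (k₂ - 3) m₂ q)
        (mono (c₁ * m₁) k₁ (m₁ - 1) q + mono (c₂ * m₂) k₂ (m₂ - 1) q)) q := by
  rw [← dY_add]
  exact HasFDerivAt.of_eq_of_pos_y3
    ((hasFDerivAt_mono c₁ k₁ m₁ hq).add (hasFDerivAt_mono c₂ k₂ m₂ hq)) hG hq

end JetSpace

open JetSpace

namespace Feps

variable (ε : ℝ) {x : Fin 6 → ℝ}

theorem eq_mono (hx : 0 < x 4) : Feps ε x = mono (5 / 3) (-3) 2 x + mono ε 5 0 x := by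
  have h3 : (x 4)⁻¹ = ((x 4 ^ (3⁻¹ : ℝ)) ^ (3 : ℤ))⁻¹ := by
    rw [← Real.rpow_intCast, ← Real.rpow_mul hx.le]; norm_num
  have h5 : x 4 ^ ((5 : ℝ) / 3) = (x 4 ^ (3⁻¹ : ℝ)) ^ (5 : ℤ) := by
    rw [← Real.rpow_intCast, ← Real.rpow_mul hx.le]; norm_num
  simp only [Feps, mono, h5, zpow_neg, ← h3]
  ring

theorem hasFDerivAt (hx : 0 < x 4) :
    HasFDerivAt (Feps ε) (dY (mono (-5 / 3) (-6) 2 x + mono (5 / 3 * ε) 2 0 x)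
      (mono (10 / 3) (-3) 1 x)) x := by
  convert hasFDerivAt_of_eq_mono_add (fun y hy => eq_mono ε hy) hx using 2 <;>
    simp only [mono, Int.reduceSub, Int.reduceNeg, Nat.reduceSub] <;> push_cast <;> ring

theorem pd_five (hx : 0 < x 4) : pd 5 (Feps ε) x = mono (10 / 3) (-3) 1 x :=
  pd_five_of_hasFDerivAt (hasFDerivAt ε hx)

theorem pd_four (hx : 0 < x 4) :
    pd 4 (Feps ε) x = mono (-5 / 3) (-6) 2 x + mono (5 / 3 * ε) 2 0 x :=
  pd_four_of_hasFDerivAt (hasFDerivAt ε hx)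

theorem pd_eq_zero (hx : 0 < x 4) {i : Fin 6} (h4 : i ≠ 4) (h5 : i ≠ 5) : pd i (Feps ε) x = 0 :=
  pd_eq_zero_of_hasFDerivAt (hasFDerivAt ε hx) h4 h5

theorem Dt_pd_eq_zero (hx : 0 < x 4) {i : Fin 6} (h4 : i ≠ 4) (h5 : i ≠ 5) :
    Dt (Feps ε) (pd i (Feps ε)) x = 0 :=
  Dt_eq_zero_of_eq_zero (fun _ hy => pd_eq_zero ε hy h4 h5) hx

theorem Dt_Dt_pd_eq_zero (hx : 0 < x 4) {i : Fin 6} (h4 : i ≠ 4) (h5 : i ≠ 5) :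
    Dt (Feps ε) (Dt (Feps ε) (pd i (Feps ε))) x = 0 :=
  Dt_eq_zero_of_eq_zero (fun _ hy => Dt_pd_eq_zero ε hy h4 h5) hx

theorem hasFDerivAt_pd_five (hx : 0 < x 4) :
    HasFDerivAt (pd 5 (Feps ε)) (dY (mono (-10 / 3) (-6) 1 x) (mono (10 / 3) (-3) 0 x)) x := by
  convert (hasFDerivAt_mono (10 / 3) (-3) 1 hx).of_eq_of_pos_y3 (fun y hy => pd_five ε hy) hx
    using 2 <;> simp only [mono, Int.reduceSub, Int.reduceNeg, Nat.reduceSub] <;> push_cast <;> ring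

theorem hasFDerivAt_pd_four (hx : 0 < x 4) :
    HasFDerivAt (pd 4 (Feps ε))
      (dY (mono (10 / 3) (-9) 2 x + mono (10 / 9 * ε) (-1) 0 x) (mono (-10 / 3) (-6) 1 x)) x := by
  convert hasFDerivAt_of_eq_mono_add (fun y hy => pd_four ε hy) hx using 2 <;>
    simp only [mono, Int.reduceSub, Int.reduceNeg, Nat.reduceSub] <;> push_cast <;> ring

theorem Dt_pd_five (hx : 0 < x 4) :
    Dt (Feps ε) (pd 5 (Feps ε)) x = mono (20 / 9) (-6) 2 x + mono (10 / 3 * ε) 2 0 x := by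
  rw [Dt_of_hasFDerivAt (hasFDerivAt_pd_five ε hx), eq_mono ε hx]
  simp only [mono]
  field_simp
  ring

theorem Dt_pd_four (hx : 0 < x 4) :
    Dt (Feps ε) (pd 4 (Feps ε)) x = mono (-20 / 9) (-9) 3 x + mono (-20 / 9 * ε) (-1) 1 x := by
  rw [Dt_of_hasFDerivAt (hasFDerivAt_pd_four ε hx), eq_mono ε hx]
  simp only [mono]
  field_simp
  ring

theorem hasFDerivAt_Dt_pd_five (hx : 0 < x 4) :
    HasFDerivAt (Dt (Feps ε) (pd 5 (Feps ε)))
      (dY (mono (-40 / 9) (-9) 2 x + mono (20 / 9 * ε) (-1) 0 x) (mono (40 / 9) (-6) 1 x)) x := by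
  convert hasFDerivAt_of_eq_mono_add (fun y hy => Dt_pd_five ε hy) hx using 2 <;>
    simp only [mono, Int.reduceSub, Int.reduceNeg, Nat.reduceSub] <;> push_cast <;> ring

theorem hasFDerivAt_Dt_pd_four (hx : 0 < x 4) :
    HasFDerivAt (Dt (Feps ε) (pd 4 (Feps ε)))
      (dY (mono (20 / 3) (-12) 3 x + mono (20 / 27 * ε) (-4) 1 x)
        (mono (-20 / 3) (-9) 2 x + mono (-20 / 9 * ε) (-1) 0 x)) x := by
  convert hasFDerivAt_of_eq_mono_add (fun y hy => Dt_pd_four ε hy) hx using 2 <;>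
    simp only [mono, Int.reduceSub, Int.reduceNeg, Nat.reduceSub] <;> push_cast <;> ring

theorem Dt_Dt_pd_five (hx : 0 < x 4) :
    Dt (Feps ε) (Dt (Feps ε) (pd 5 (Feps ε))) x
      = mono (80 / 27) (-9) 3 x + mono (20 / 3 * ε) (-1) 1 x := by
  rw [Dt_of_hasFDerivAt (hasFDerivAt_Dt_pd_five ε hx), eq_mono ε hx]
  simp only [mono]
  field_simp
  ring

theorem Dt_Dt_pd_four (hx : 0 < x 4) :
    Dt (Feps ε) (Dt (Feps ε) (pd 4 (Feps ε))) x
      = mono (-40 / 9) (-12) 4 x + mono (-260 / 27 * ε) (-4) 2 x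
        + mono (-20 / 9 * ε ^ 2) 4 0 x := by
  rw [Dt_of_hasFDerivAt (hasFDerivAt_Dt_pd_four ε hx), eq_mono ε hx]
  simp only [mono]
  field_simp
  ring

end Feps

theorem stmt13_general (ε : ℝ) (p : Fin 6 → ℝ)
    (hp : 0 < p 4) :
    Wuensch1 (Feps ε) p ∧ Wuensch2 (Feps ε) p ∧ Wuensch3 (Feps ε) p := by
  have h1 := Feps.pd_eq_zero ε hp (i := 1) (by decide) (by decide)
  have h2 := Feps.pd_eq_zero ε hp (i := 2) (by decide) (by decide)
  have h3 := Feps.pd_eq_zero ε hp (i := 3) (by decide) (by decide)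
  have hD2 := Feps.Dt_pd_eq_zero ε hp (i := 2) (by decide) (by decide)
  have hD3 := Feps.Dt_pd_eq_zero ε hp (i := 3) (by decide) (by decide)
  have hDD3 := Feps.Dt_Dt_pd_eq_zero ε hp (i := 3) (by decide) (by decide)
  refine ⟨?_, ?_, ?_⟩ <;>
  · simp only [Wuensch1, Wuensch2, Wuensch3, Feps.Dt_Dt_pd_five ε hp, Feps.Dt_Dt_pd_four ε hp,
      Feps.Dt_pd_five ε hp, Feps.Dt_pd_four ε hp, Feps.pd_five ε hp, Feps.pd_four ε hp,
      h1, h2, h3, hD2, hD3, hDD3, mono]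
    field_simp
    ring

/-- For `ε ∈ {−1,0,1}` the ODE `y⁽⁵⁾ = 5y₄²/(3y₃) + ε·y₃^{5/3}` satisfies the three
Wünschmann conditions at every point with `y₃ > 0`. -/
theorem stmt13 (ε : ℝ) (hε : ε = -1 ∨ ε = 0 ∨ ε = 1) (p : Fin 6 → ℝ)
    (hp : 0 < p 4) :
    Wuensch1 (Feps ε) p ∧ Wuensch2 (Feps ε) p ∧ Wuensch3 (Feps ε) p :=
  stmt13_general ε p hp
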